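/- Let G be a digraph on a finite vertex set V with a weight function w : V → ℝ, and suppose G admits at least one doubly infinite walk. Then the supremum, over all doubly infinite walks W in G, of the upper average weight of W equals the maximum, over all simple cycles C of G, of the average weight of C; and likewise the infimum, over all doubly infinite walks W, of the lower average weight of W equals the minimum, over all simple cycles C, of the average weight of C. -/

import Mathlib

/-!
If `M` is the largest average weight of a simple cycle, a simple cycle of length `ℓ` weighs at
most `ℓ * M`, so cutting it out of a walk segment removes at most `ℓ * M`. A segment of length
`n > |V|` always contains a simple cycle, so cutting cycles until at most `|V|` vertices remain
bounds the weight of every segment by `n * M + O(1)`: every upper average is at most `M`.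
The periodic walk around a maximal cycle has average exactly `M`, and the statement for
infima and minima is the one for suprema and maxima applied to `-w`.
-/

open Filter

/-- The set of average weights of simple cycles in the digraph `adj` on `V`,
where a simple cycle of length `ℓ ≥ 1` is encoded as an `ℓ`-periodic doubly
infinite walk `c : ℤ → V` that is injective on `[0, ℓ)`. -/
def cycleAvgSet {V : Type*} (adj : V → V → Prop) (w : V → ℝ) : Set ℝ :=
  {x : ℝ | ∃ (ℓ : ℕ) (c : ℤ → V), 0 < ℓ ∧
    (∀ i : ℤ, adj (c i) (c (i + 1))) ∧
    (∀ i : ℤ, c (i + (ℓ : ℤ)) = c i) ∧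
    Set.InjOn c (Set.Ico (0 : ℤ) (ℓ : ℤ)) ∧
    x = (∑ i ∈ Finset.Ico (0 : ℤ) (ℓ : ℤ), w (c i)) / (ℓ : ℝ)}

/-- The set of upper average weights of doubly infinite walks. -/
noncomputable def walkUpperSet {V : Type*} (adj : V → V → Prop) (w : V → ℝ) : Set ℝ :=
  {x : ℝ | ∃ v : ℤ → V, (∀ i : ℤ, adj (v i) (v (i + 1))) ∧
    x = Filter.limsup
      (fun N : ℕ => (∑ i ∈ Finset.Icc (-(N : ℤ)) (N : ℤ), w (v i)) / (2 * (N : ℝ) + 1))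
      Filter.atTop}

/-- The set of lower average weights of doubly infinite walks. -/
noncomputable def walkLowerSet {V : Type*} (adj : V → V → Prop) (w : V → ℝ) : Set ℝ :=
  {x : ℝ | ∃ v : ℤ → V, (∀ i : ℤ, adj (v i) (v (i + 1))) ∧
    x = Filter.liminf
      (fun N : ℕ => (∑ i ∈ Finset.Icc (-(N : ℤ)) (N : ℤ), w (v i)) / (2 * (N : ℝ) + 1))
      Filter.atTop}

open Finset

section IntervalSums

variable {M : Type*} [AddCommMonoid M]

theorem sum_Ico_zero_eq_sum_range (f : ℤ → M) (n : ℕ) :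
    ∑ i ∈ Ico (0 : ℤ) n, f i = ∑ k ∈ range n, f k := by
  simp [Int.Ico_eq_finset_map]

theorem sum_Icc_neg_eq_sum_range (f : ℤ → M) (N : ℕ) :
    ∑ i ∈ Icc (-(N : ℤ)) N, f i = ∑ k ∈ range (2 * N + 1), f (-N + k) := by
  rw [Int.Icc_eq_finset_map, sum_map, show ((N : ℤ) + 1 - -N).toNat = 2 * N + 1 by omega]
  rfl

end IntervalSums

/-- The average used in `walkUpperSet` and `walkLowerSet`: those are the limsups and liminfs of
`centeredAvg (w ∘ v)`. -/
noncomputable def centeredAvg (f : ℤ → ℝ) (N : ℕ) : ℝ :=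
  (∑ i ∈ Icc (-(N : ℤ)) N, f i) / (2 * (N : ℝ) + 1)

theorem centeredAvg_eq (f : ℤ → ℝ) (N : ℕ) :
    centeredAvg f N = (∑ k ∈ range (2 * N + 1), f (-N + k)) / ((2 * N + 1 : ℕ) : ℝ) := by
  rw [centeredAvg, sum_Icc_neg_eq_sum_range]
  push_cast
  rfl

theorem centeredAvg_neg (f : ℤ → ℝ) : centeredAvg (-f) = -centeredAvg f := by
  ext N
  simp [centeredAvg, neg_div]

theorem le_centeredAvg {f : ℤ → ℝ} {b : ℝ} (hb : ∀ i, b ≤ f i) (N : ℕ) : b ≤ centeredAvg f N := by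
  have h := card_nsmul_le_sum (range (2 * N + 1)) (fun k => f (-N + k)) b fun k _ => hb _
  rw [card_range, nsmul_eq_mul] at h
  rwa [centeredAvg_eq, le_div_iff₀ (by positivity), mul_comm]

theorem tendsto_const_div_two_mul_add_one (C : ℝ) :
    Tendsto (fun N : ℕ => C / (2 * (N : ℝ) + 1)) atTop (nhds 0) :=
  tendsto_const_nhds.div_atTop <| tendsto_atTop_add_const_right _ 1 <|
    tendsto_natCast_atTop_atTop.const_mul_atTop two_pos

theorem limsup_le_of_le_add {ι : Type*} {l : Filter ι} [l.NeBot] {x ε : ι → ℝ} {a : ℝ}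
    (hx : IsBoundedUnder (· ≥ ·) l x) (h : ∀ n, x n ≤ a + ε n) (hε : Tendsto ε l (nhds 0)) :
    limsup x l ≤ a := by
  have hlim : Tendsto (fun n => a + ε n) l (nhds a) := by simpa using tendsto_const_nhds.add hε
  calc limsup x l ≤ limsup (fun n => a + ε n) l :=
        limsup_le_limsup (Eventually.of_forall h) hx.isCoboundedUnder_le hlim.isBoundedUnder_le
    _ = a := hlim.limsup_eq

/-- No boundedness is needed: `Real.sSup_neg` also holds for the junk values. -/
theorem Real.liminf_neg {ι : Type*} (u : ι → ℝ) (l : Filter ι) :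
    liminf (-u) l = -limsup u l := by
  rw [liminf_eq, limsup_eq, ← Real.sSup_neg]
  congr 1
  ext a
  simp [le_neg]

namespace Function.Periodic

theorem sum_range_add {M : Type*} [AddCancelCommMonoid M] {f : ℤ → M} {ℓ : ℕ}
    (hf : Periodic f ℓ) (a : ℤ) :
    ∑ k ∈ range ℓ, f (a + k) = ∑ k ∈ range ℓ, f k := by
  set T : ℤ → M := fun b => ∑ k ∈ range ℓ, f (b + k)
  -- `T (b + 1)` and `T b` differ by `f (b + ℓ) - f b = 0`.
  have hT : Periodic T 1 := by
    intro b
    have h := (sum_range_succ (fun k : ℕ => f (b + k)) ℓ).symm.trans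
      (sum_range_succ' (fun k : ℕ => f (b + k)) ℓ)
    simp only [hf b, Nat.cast_add, Nat.cast_one, Nat.cast_zero, add_zero, ← add_assoc] at h
    simpa only [T, add_right_comm b 1] using add_right_cancel h.symm
  simpa [T] using hT.int_mul a 0

variable {f : ℤ → ℝ} {ℓ : ℕ}

theorem abs_sum_range_add_sub_le (hf : Periodic f ℓ) (hℓ : 0 < ℓ) (a : ℤ) (n : ℕ) :
    |∑ k ∈ range n, f (a + k) - n * (∑ k ∈ range ℓ, f k) / ℓ| ≤ 2 * ∑ k ∈ range ℓ, |f k| := by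
  set S := ∑ k ∈ range ℓ, f k
  set A := ∑ k ∈ range ℓ, |f k|
  set G : ℕ → ℝ := fun n => ∑ k ∈ range n, f (a + k) - n * S / ℓ
  -- The error term is `ℓ`-periodic in `n`, so only `n < ℓ` has to be bounded.
  have hG : Periodic G ℓ := by
    intro n
    simp only [G, Finset.sum_range_add, Nat.cast_add, ← add_assoc, hf.sum_range_add (a + n)]
    field_simp
    ring
  have hr : n % ℓ < ℓ := Nat.mod_lt _ hℓ
  have hrest : |∑ k ∈ range (n % ℓ), f (a + k)| ≤ A := calc
    _ ≤ ∑ k ∈ range (n % ℓ), |f (a + k)| := abs_sum_le_sum_abs _ _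
    _ ≤ ∑ k ∈ range ℓ, |f (a + k)| :=
      sum_le_sum_of_subset_of_nonneg (range_subset_range.2 hr.le) fun _ _ _ => abs_nonneg _
    _ = A := (hf.comp fun x => |x|).sum_range_add a
  have hfrac : |(n % ℓ : ℕ) * S / ℓ| ≤ A := by
    rw [abs_div, abs_mul, Nat.abs_cast, Nat.abs_cast, div_le_iff₀ (by exact_mod_cast hℓ),
      mul_comm]
    have hS : |S| ≤ A := abs_sum_le_sum_abs _ _
    gcongr
  change |G n| ≤ 2 * A
  rw [← hG.map_mod_nat n]
  linarith [abs_sub (∑ k ∈ range (n % ℓ), f (a + k)) ((n % ℓ : ℕ) * S / ℓ)]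

theorem tendsto_centeredAvg (hf : Periodic f ℓ) (hℓ : 0 < ℓ) :
    Tendsto (centeredAvg f) atTop (nhds ((∑ k ∈ range ℓ, f k) / ℓ)) := by
  refine tendsto_iff_norm_sub_tendsto_zero.2 <| squeeze_zero (fun _ => norm_nonneg _) (fun N => ?_)
    (tendsto_const_div_two_mul_add_one (2 * ∑ k ∈ range ℓ, |f k|))
  have hN : (0 : ℝ) < 2 * N + 1 := by positivity
  have h := hf.abs_sum_range_add_sub_le hℓ (-N) (2 * N + 1)
  rw [Real.norm_eq_abs, centeredAvg, sum_Icc_neg_eq_sum_range, div_sub' hN.ne', abs_div,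
    abs_of_pos hN]
  push_cast at h
  rw [mul_div_assoc] at h
  exact div_le_div_of_nonneg_right h hN.le

end Function.Periodic

section Walks

variable {V : Type*} {adj : V → V → Prop} {w : V → ℝ}

theorem mem_cycleAvgSet_of_injOn {u : ℕ → V} {ℓ : ℕ} (hu : ∀ k, adj (u k) (u (k + 1)))
    (hℓ : 0 < ℓ) (hclosed : u ℓ = u 0) (hinj : Set.InjOn u (Set.Iio ℓ)) :
    (∑ k ∈ range ℓ, w (u k)) / ℓ ∈ cycleAvgSet adj w := by
  have hℓ' : (0 : ℤ) < ℓ := by exact_mod_cast hℓ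
  set c : ℤ → V := fun i => u (i % ℓ).toNat
  have hc : ∀ k < ℓ, c k = u k := fun k hk => by
    simp [c, ← Int.natCast_mod, Nat.mod_eq_of_lt hk]
  refine ⟨ℓ, c, hℓ, fun i => ?_, fun i => by simp [c], ?_, ?_⟩
  · have h0 := Int.emod_nonneg i hℓ'.ne'
    have h1 := Int.emod_lt_of_pos i hℓ'
    simp only [c, ← Int.emod_add_emod i]
    rcases (show i % ℓ + 1 < ℓ ∨ i % ℓ + 1 = ℓ by omega) with h | h
    · rw [Int.emod_eq_of_lt (by omega) h, show (i % ℓ + 1).toNat = (i % ℓ).toNat + 1 by omega]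
      exact hu _
    · rw [h, Int.emod_self, Int.toNat_zero, ← hclosed]
      convert hu (i % ℓ).toNat using 2
      omega
  · rintro p ⟨hp0, hpℓ⟩ q ⟨hq0, hqℓ⟩ hpq
    lift p to ℕ using hp0
    lift q to ℕ using hq0
    rw [Nat.cast_lt] at hpℓ hqℓ
    rw [hc p hpℓ, hc q hqℓ] at hpq
    exact congrArg _ (hinj hpℓ hqℓ hpq)
  · rw [sum_Ico_zero_eq_sum_range]
    exact congrArg (· / _) (sum_congr rfl fun k hk => by rw [hc k (mem_range.1 hk)])

theorem exists_injOn_segment_le_card [Fintype V] (u : ℕ → V) :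
    ∃ a ℓ, 0 < ℓ ∧ a + ℓ ≤ Fintype.card V ∧ u (a + ℓ) = u a ∧
      Set.InjOn (fun k => u (a + k)) (Set.Iio ℓ) := by
  classical
  have hrep : ∃ ℓ, 0 < ℓ ∧ ∃ a, a + ℓ ≤ Fintype.card V ∧ u (a + ℓ) = u a := by
    obtain ⟨x, y, hxy, hu⟩ :=
      Fintype.exists_ne_map_eq_of_card_lt (fun k : Fin (Fintype.card V + 1) => u k) (by simp)
    wlog h : x < y generalizing x y
    · exact this y x hxy.symm hu.symm (lt_of_le_of_ne (not_lt.1 h) hxy.symm)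
    have hy := y.isLt
    rw [Fin.lt_def] at h
    exact ⟨y - x, by omega, x, by omega, by rw [Nat.add_sub_cancel' h.le]; exact hu.symm⟩
  obtain ⟨hℓ, a, ha, hclosed⟩ := Nat.find_spec hrep
  refine ⟨a, Nat.find hrep, hℓ, ha, hclosed, ?_⟩
  have hne : ∀ p q, p < q → q < Nat.find hrep → u (a + p) ≠ u (a + q) := fun p q hpq hq heq =>
    Nat.find_min hrep (show q - p < Nat.find hrep by omega)
      ⟨by omega, a + p, by omega, by rw [heq]; congr 1; omega⟩
  intro p hp q hq heq
  rcases lt_trichotomy p q with h | h | h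
  · exact absurd heq (hne p q h hq)
  · exact h
  · exact absurd heq.symm (hne q p h hp)

def eraseSegment (u : ℕ → V) (a ℓ : ℕ) : ℕ → V := fun k => if k < a then u k else u (k + ℓ)

theorem eraseSegment_adj {u : ℕ → V} {a ℓ : ℕ} (hu : ∀ k, adj (u k) (u (k + 1)))
    (hclosed : u (a + ℓ) = u a) (k : ℕ) :
    adj (eraseSegment u a ℓ k) (eraseSegment u a ℓ (k + 1)) := by
  unfold eraseSegment
  split_ifs with h₁ h₂ h₂
  · exact hu k
  · rw [show k + 1 = a by omega, hclosed, ← show k + 1 = a by omega]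
    exact hu k
  · omega
  · rw [add_right_comm]
    exact hu (k + ℓ)

theorem sum_range_add_eq_sum_eraseSegment {M : Type*} [AddCommMonoid M] (f : V → M) (u : ℕ → V)
    (a ℓ r : ℕ) :
    ∑ k ∈ range (a + ℓ + r), f (u k) =
      ∑ k ∈ range (a + r), f (eraseSegment u a ℓ k) + ∑ k ∈ range ℓ, f (u (a + k)) := by
  have hlow : ∑ k ∈ range a, f (eraseSegment u a ℓ k) = ∑ k ∈ range a, f (u k) :=
    sum_congr rfl fun k hk => by rw [eraseSegment, if_pos (mem_range.1 hk)]
  have hhigh : ∀ k, eraseSegment u a ℓ (a + k) = u (a + ℓ + k) := fun k => by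
    rw [eraseSegment, if_neg (by omega), add_right_comm]
  simp only [Finset.sum_range_add, hlow, hhigh]
  abel

theorem sum_range_le_of_forall_cycleAvgSet_le [Fintype V] {M K : ℝ}
    (hM : ∀ x ∈ cycleAvgSet adj w, x ≤ M) (hK : ∀ x, w x ≤ M + K) (hK0 : 0 ≤ K) (n : ℕ)
    (u : ℕ → V) (hu : ∀ k, adj (u k) (u (k + 1))) :
    ∑ k ∈ range n, w (u k) ≤ n * M + Fintype.card V * K := by
  induction n using Nat.strong_induction_on generalizing u with
  | _ n ih =>
  by_cases hn : n ≤ Fintype.card V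
  · calc ∑ k ∈ range n, w (u k) ≤ ∑ _k ∈ range n, (M + K) := sum_le_sum fun k _ => hK _
      _ = n * M + n * K := by rw [sum_const, card_range, nsmul_eq_mul, mul_add]
      _ ≤ n * M + Fintype.card V * K := by gcongr
  obtain ⟨a, ℓ, hℓ, haℓ, hclosed, hinj⟩ := exists_injOn_segment_le_card u
  obtain ⟨r, rfl⟩ : ∃ r, n = a + ℓ + r := ⟨n - (a + ℓ), by omega⟩
  have hcycle : ∑ k ∈ range ℓ, w (u (a + k)) ≤ ℓ * M := by
    have h := hM _ (mem_cycleAvgSet_of_injOn (u := fun k => u (a + k)) (fun k => hu (a + k)) hℓ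
      hclosed hinj)
    rwa [div_le_iff₀ (by exact_mod_cast hℓ), mul_comm] at h
  have hcut := ih (a + r) (by omega) (eraseSegment u a ℓ) (eraseSegment_adj hu hclosed)
  rw [sum_range_add_eq_sum_eraseSegment]
  push_cast at hcut ⊢
  linarith

theorem cycleAvgSet_subset_range :
    cycleAvgSet adj w ⊆ Set.range fun s : Finset V => (∑ x ∈ s, w x) / #s := by
  classical
  rintro _ ⟨ℓ, c, -, -, -, hinj, rfl⟩
  rw [← coe_Ico] at hinj
  exact ⟨(Ico 0 (ℓ : ℤ)).image c, by
    dsimp only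
    rw [sum_image hinj, card_image_of_injOn hinj]
    simp⟩

theorem cycleAvgSet_finite [Finite V] : (cycleAvgSet adj w).Finite :=
  (Set.finite_range _).subset cycleAvgSet_subset_range

theorem cycleAvgSet_nonempty [Fintype V] (hwalk : ∃ v : ℤ → V, ∀ i, adj (v i) (v (i + 1))) :
    (cycleAvgSet adj w).Nonempty := by
  obtain ⟨v, hv⟩ := hwalk
  obtain ⟨a, ℓ, hℓ, -, hclosed, hinj⟩ := exists_injOn_segment_le_card fun k : ℕ => v k
  exact ⟨_, mem_cycleAvgSet_of_injOn (u := fun k => v (a + k : ℕ))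
    (fun k => by simpa [add_assoc] using hv (a + k)) hℓ hclosed hinj⟩

theorem cycleAvgSet_neg : cycleAvgSet adj (-w) = -cycleAvgSet adj w := by
  ext x
  simp [cycleAvgSet, neg_div, neg_eq_iff_eq_neg]

theorem centeredAvg_le_add [Fintype V] {M K : ℝ} (hM : ∀ x ∈ cycleAvgSet adj w, x ≤ M)
    (hK : ∀ x, w x ≤ M + K) (hK0 : 0 ≤ K) {v : ℤ → V} (hv : ∀ i, adj (v i) (v (i + 1)))
    (N : ℕ) : centeredAvg (w ∘ v) N ≤ M + Fintype.card V * K / (2 * N + 1) := by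
  have h := sum_range_le_of_forall_cycleAvgSet_le hM hK hK0 (2 * N + 1) (fun k => v (-N + k))
    (fun k => by simpa [add_assoc] using hv (-N + k))
  have hN : (0 : ℝ) < 2 * N + 1 := by positivity
  rw [centeredAvg_eq, div_le_iff₀ (by positivity), add_mul]
  push_cast [Function.comp_apply] at h ⊢
  rw [div_mul_cancel₀ _ hN.ne']
  linarith

theorem sSup_walkUpperSet_eq [Fintype V] {M : ℝ} (hM : IsGreatest (cycleAvgSet adj w) M) :
    sSup (walkUpperSet adj w) = M := by
  refine IsGreatest.csSup_eq ⟨?_, ?_⟩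
  · obtain ⟨ℓ, c, hℓ, hc, hper, -, rfl⟩ := hM.1
    have hf : Function.Periodic (w ∘ c) ℓ := fun i => congrArg w (hper i)
    refine ⟨c, hc, ?_⟩
    rw [sum_Ico_zero_eq_sum_range]
    exact (hf.tendsto_centeredAvg hℓ).limsup_eq.symm
  · rintro _ ⟨v, hv, rfl⟩
    have : Nonempty V := ⟨v 0⟩
    obtain ⟨xmin, hxmin⟩ := Finite.exists_min w
    obtain ⟨xmax, hxmax⟩ := Finite.exists_max w
    exact limsup_le_of_le_add (isBoundedUnder_of ⟨w xmin, le_centeredAvg fun i => hxmin (v i)⟩)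
      (centeredAvg_le_add hM.2 (fun x => by linarith [hxmax x, le_abs_self (w xmax - M)])
        (abs_nonneg _) hv)
      (tendsto_const_div_two_mul_add_one _)

theorem walkLowerSet_eq_neg_walkUpperSet_neg : walkLowerSet adj w = -walkUpperSet adj (-w) := by
  ext x
  refine exists_congr fun v => and_congr_right fun _ => ?_
  change x = liminf (centeredAvg (w ∘ v)) atTop ↔ -x = limsup (centeredAvg ((-w) ∘ v)) atTop
  rw [Pi.neg_comp, centeredAvg_neg, ← neg_neg (limsup _ _), ← Real.liminf_neg, neg_neg,
    neg_inj]

end Walks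

/-- In a finite vertex-weighted digraph admitting a doubly infinite walk, the supremum of
upper average weights of doubly infinite walks equals the maximum average weight of a
simple cycle, and the infimum of lower average weights equals the minimum average weight
of a simple cycle. -/
theorem sup_walk_avg_eq_max_cycle_avg {V : Type*} [Fintype V]
    (adj : V → V → Prop) (w : V → ℝ)
    (hwalk : ∃ v : ℤ → V, ∀ i : ℤ, adj (v i) (v (i + 1))) :
    ∃ M m : ℝ,
      IsGreatest (cycleAvgSet adj w) M ∧
      IsLeast (cycleAvgSet adj w) m ∧
      sSup (walkUpperSet adj w) = M ∧
      sInf (walkLowerSet adj w) = m := by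
  have hcompact : IsCompact (cycleAvgSet adj w) := cycleAvgSet_finite.isCompact
  obtain ⟨M, hM⟩ := hcompact.exists_isGreatest (cycleAvgSet_nonempty hwalk)
  obtain ⟨m, hm⟩ := hcompact.exists_isLeast (cycleAvgSet_nonempty hwalk)
  have hm' : IsGreatest (cycleAvgSet adj (-w)) (-m) := by
    rw [cycleAvgSet_neg]
    exact ⟨Set.neg_mem_neg.2 hm.1, fun x hx => le_neg_of_le_neg (hm.2 hx)⟩
  refine ⟨M, m, hM, hm, sSup_walkUpperSet_eq hM, ?_⟩
  rw [walkLowerSet_eq_neg_walkUpperSet_neg, Real.sInf_neg, sSup_walkUpperSet_eq hm', neg_neg]
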